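/- With a_n the total bitsum over multus bitstrings of length n and f(n+2) the count of such strings, the limiting density d = \lim_{n\to\infty} a_n/(n f(n+2)) exists and equals (1/3)[2 - ((23+3\sqrt{69})/1058)^{1/3} + ((-23+3\sqrt{69})/1058)^{1/3}], and satisfies d > 1/2. -/

import Mathlib

open Filter

/-- A bitstring is *multus* if every `1` bit has at least one neighboring `1`. -/
def Multus (l : List Bool) : Prop :=
  ∀ i, l[i]? = some true →
    (0 < i ∧ l[i - 1]? = some true) ∨ l[i + 1]? = some true

open Classical in
/-- `a n` : total number of `1`s summed over all multus bitstrings of length `n`. -/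
noncomputable def multusBitsum (n : ℕ) : ℕ :=
  ∑ v : Fin n → Bool, if Multus (List.ofFn v) then (List.ofFn v).count true else 0

/-- `f k = 2 f(k-1) - f(k-2) + f(k-3)`, `f 0 = 0`, `f 1 = f 2 = 1`;
`f (n+2)` counts multus bitstrings of length `n`. -/
def f : ℕ → ℤ
  | 0 => 0
  | 1 => 1
  | 2 => 1
  | (k + 3) => 2 * f (k + 2) - f (k + 1) + f k

def PPred (l : List Bool) : Prop :=
  ∀ i, l[i+1]? = some true → (l[i]? = some true ∨ l[i+2]? = some true)

lemma multus_nil : Multus [] := by intro i hi; simp at hi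

lemma ppred_nil : PPred [] := by intro i hi; simp at hi

lemma multus_cons_false {l : List Bool} : Multus (false :: l) ↔ Multus l := by
  constructor
  · intro h i hi
    rcases h (i+1) (by simpa using hi) with ⟨hpos, hget⟩ | hget
    · rcases i with _ | j
      · simp at hget
      · exact Or.inl ⟨Nat.succ_pos j, by simpa using hget⟩
    · exact Or.inr (by simpa using hget)
  · intro h i hi
    rcases i with _ | j
    · simp at hi
    · rcases h j (by simpa using hi) with ⟨hpos, hget⟩ | hget
      · rcases j with _ | k
        · omega
        · exact Or.inl ⟨by omega, by simpa using hget⟩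
      · exact Or.inr (by simpa using hget)

lemma ppred_cons_false {l : List Bool} : PPred (false :: l) ↔ Multus l := by
  constructor
  · intro h i hi
    rcases i with _ | j
    · rcases h 0 (by simpa using hi) with hget | hget
      · simp at hget
      · exact Or.inr (by simpa using hget)
    · rcases h (j+1) (by simpa using hi) with hget | hget
      · exact Or.inl ⟨Nat.succ_pos j, by simpa using hget⟩
      · exact Or.inr (by simpa using hget)
  · intro h i hi
    rcases h i (by simpa using hi) with ⟨hpos, hget⟩ | hget
    · rcases i with _ | j
      · omega
      · exact Or.inl (by simpa using hget)
    · exact Or.inr (by simpa using hget)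

lemma multus_cons_true {l : List Bool} :
    Multus (true :: l) ↔ (l.head? = some true ∧ PPred l) := by
  constructor
  · intro h
    have h0 := h 0 (by simp)
    have hl0 : l[0]? = some true := by
      rcases h0 with ⟨hpos, _⟩ | hget
      · omega
      · simpa using hget
    constructor
    · cases l with
      | nil => simp at hl0
      | cons a t => simpa using hl0
    · intro i hi
      rcases h (i+2) (by simpa using hi) with ⟨hpos, hget⟩ | hget
      · exact Or.inl (by simpa using hget)
      · exact Or.inr (by simpa using hget)
  · rintro ⟨hh, hp⟩ i hi
    have hl0 : l[0]? = some true := by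
      cases l with
      | nil => simp at hh
      | cons a t => simpa using hh
    rcases i with _ | j
    · exact Or.inr (by simpa using hl0)
    · rcases j with _ | k
      · exact Or.inl ⟨Nat.one_pos, by simp⟩
      · rcases hp k (by simpa using hi) with hget | hget
        · exact Or.inl ⟨by omega, by simpa using hget⟩
        · exact Or.inr (by simpa using hget)

lemma ppred_cons_true {l : List Bool} : PPred (true :: l) ↔ PPred l := by
  constructor
  · intro h i hi
    rcases h (i+1) (by simpa using hi) with hget | hget
    · exact Or.inl (by simpa using hget)
    · exact Or.inr (by simpa using hget)
  · intro h i hi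
    rcases i with _ | j
    · exact Or.inl (by simp)
    · rcases h j (by simpa using hi) with hget | hget
      · exact Or.inl (by simpa using hget)
      · exact Or.inr (by simpa using hget)

mutual
def Mb : List Bool → Bool
  | [] => true
  | false :: l => Mb l
  | true :: l => (l.head? == some true) && Pb l
def Pb : List Bool → Bool
  | [] => true
  | false :: l => Mb l
  | true :: l => Pb l
end

lemma multus_iff : ∀ l : List Bool, (Multus l ↔ Mb l = true) ∧ (PPred l ↔ Pb l = true) := by
  intro l
  induction l with
  | nil => exact ⟨⟨fun _ => rfl, fun _ => multus_nil⟩, ⟨fun _ => rfl, fun _ => ppred_nil⟩⟩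
  | cons b l ih =>
    cases b
    · constructor
      · rw [multus_cons_false, show Mb (false :: l) = Mb l from rfl]; exact ih.1
      · rw [ppred_cons_false, show Pb (false :: l) = Mb l from rfl]; exact ih.1
    · constructor
      · rw [multus_cons_true, show Mb (true :: l) = ((l.head? == some true) && Pb l) from rfl,
          Bool.and_eq_true, beq_iff_eq]
        exact and_congr Iff.rfl ih.2
      · rw [ppred_cons_true, show Pb (true :: l) = Pb l from rfl]; exact ih.2

-- sum machinery
def SL (n : ℕ) (G : List Bool → ℕ) : ℕ := ∑ v : Fin n → Bool, G (List.ofFn v)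

lemma SL_zero (G : List Bool → ℕ) : SL 0 G = G [] := by
  simp [SL]

lemma SL_succ (n : ℕ) (G : List Bool → ℕ) :
    SL (n+1) G = SL n (fun l => G (false :: l)) + SL n (fun l => G (true :: l)) := by
  rw [SL, ← (Fin.consEquiv (fun _ : Fin (n+1) => Bool)).sum_comp]
  rw [Fintype.sum_prod_type]
  rw [Fintype.sum_bool]
  have h : ∀ (b : Bool) (w : Fin n → Bool),
      List.ofFn (Fin.consEquiv (fun _ : Fin (n+1) => Bool) (b, w)) = b :: List.ofFn w := by
    intro b w
    simp [Fin.consEquiv, List.ofFn_succ]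
  simp only [h]
  rw [add_comm]
  rfl

lemma SL_add (n : ℕ) (F G : List Bool → ℕ) :
    SL n (fun l => F l + G l) = SL n F + SL n G := by
  simp [SL, Finset.sum_add_distrib]

mutual
def mcs : ℕ → ℕ
  | 0 => 1
  | n+1 => mcs n + qcs n
def pcs : ℕ → ℕ
  | 0 => 1
  | n+1 => mcs n + pcs n
def qcs : ℕ → ℕ
  | 0 => 0
  | n+1 => pcs n
def mss : ℕ → ℕ
  | 0 => 0
  | n+1 => mss n + qcs n + qss n
def pss : ℕ → ℕ
  | 0 => 0
  | n+1 => mss n + pcs n + pss n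
def qss : ℕ → ℕ
  | 0 => 0
  | n+1 => pcs n + pss n
end

lemma dp_eq : ∀ n : ℕ,
    mcs n = SL n (fun l => if Mb l then 1 else 0) ∧
    pcs n = SL n (fun l => if Pb l then 1 else 0) ∧
    qcs n = SL n (fun l => if (l.head? == some true) && Pb l then 1 else 0) ∧
    mss n = SL n (fun l => if Mb l then l.count true else 0) ∧
    pss n = SL n (fun l => if Pb l then l.count true else 0) ∧
    qss n = SL n (fun l => if (l.head? == some true) && Pb l then l.count true else 0) := by
  intro n
  induction n with
  | zero =>
    refine ⟨?_, ?_, ?_, ?_, ?_, ?_⟩ <;> rw [SL_zero] <;> simp [mcs, pcs, qcs, mss, pss, qss, Mb, Pb]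
  | succ n ih =>
    obtain ⟨hmc, hpc, hqc, hms, hps, hqs⟩ := ih
    have count_false : ∀ l : List Bool, (false :: l).count true = l.count true := by
      intro l; simp
    have count_true : ∀ l : List Bool, (true :: l).count true = l.count true + 1 := by
      intro l; simp
    have MbF : ∀ l : List Bool, Mb (false :: l) = Mb l := fun l => rfl
    have MbT : ∀ l : List Bool, Mb (true :: l) = ((l.head? == some true) && Pb l) := fun l => rfl
    have PbF : ∀ l : List Bool, Pb (false :: l) = Mb l := fun l => rfl
    have PbT : ∀ l : List Bool, Pb (true :: l) = Pb l := fun l => rfl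
    have headF : ∀ l : List Bool, (((false :: l).head? == some true) && Pb (false :: l)) = false := by
      intro l; simp
    have headT : ∀ l : List Bool, (((true :: l).head? == some true) && Pb (true :: l)) = Pb l := by
      intro l; simp [PbT]
    refine ⟨?_, ?_, ?_, ?_, ?_, ?_⟩
    · rw [show mcs (n+1) = mcs n + qcs n from rfl, SL_succ]
      simp only [MbF, MbT]
      rw [hmc, hqc]
    · rw [show pcs (n+1) = mcs n + pcs n from rfl, SL_succ]
      simp only [PbF, PbT]
      rw [hmc, hpc]
    · rw [show qcs (n+1) = pcs n from rfl, SL_succ]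
      simp only [headF, headT]
      simp only [if_neg (by simp : ¬ (false = true))]
      rw [hpc]
      simp [SL]
    · rw [show mss (n+1) = mss n + qcs n + qss n from rfl, SL_succ]
      simp only [MbF, MbT, count_false, count_true]
      have split : (SL n fun l => if ((l.head? == some true) && Pb l) = true then l.count true + 1 else 0)
          = SL n (fun l => if ((l.head? == some true) && Pb l) = true then l.count true else 0)
            + SL n (fun l => if ((l.head? == some true) && Pb l) = true then 1 else 0) := by
        rw [← SL_add]
        congr 1; funext l
        by_cases h : (((l.head? == some true) && Pb l) = true) <;> simp [h]
      rw [hms, split, ← hqs, ← hqc]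
      ring
    · rw [show pss (n+1) = mss n + pcs n + pss n from rfl, SL_succ]
      simp only [PbF, PbT, count_false, count_true]
      have split : (SL n fun l => if Pb l = true then l.count true + 1 else 0)
          = SL n (fun l => if Pb l = true then l.count true else 0)
            + SL n (fun l => if Pb l = true then 1 else 0) := by
        rw [← SL_add]
        congr 1; funext l
        by_cases h : (Pb l = true) <;> simp [h]
      rw [hms, split, ← hps, ← hpc]
      ring
    · rw [show qss (n+1) = pcs n + pss n from rfl, SL_succ]
      simp only [headF, headT, count_false, count_true]
      simp only [if_neg (by simp : ¬ (false = true))]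
      have split : (SL n fun l => if Pb l = true then l.count true + 1 else 0)
          = SL n (fun l => if Pb l = true then l.count true else 0)
            + SL n (fun l => if Pb l = true then 1 else 0) := by
        rw [← SL_add]
        congr 1; funext l
        by_cases h : (Pb l = true) <;> simp [h]
      rw [split, ← hps, ← hpc]
      have hz : SL n (fun _ => (0:ℕ)) = 0 := by simp [SL]
      omega

lemma multusBitsum_eq (n : ℕ) : multusBitsum n = mss n := by
  classical
  rw [(dp_eq n).2.2.2.1, multusBitsum, SL]
  apply Finset.sum_congr rfl
  intro v _
  exact if_congr (multus_iff (List.ofFn v)).1 rfl rfl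

lemma mcs_f : ∀ n : ℕ, ((mcs n : ℤ) = f (n+2)) ∧ ((qcs n : ℤ) = f (n+3) - f (n+2)) ∧
    ((pcs n : ℤ) = f (n+4) - f (n+3)) := by
  intro n
  induction n with
  | zero => refine ⟨?_, ?_, ?_⟩ <;> simp [mcs, qcs, pcs] <;> rfl
  | succ n ih =>
    obtain ⟨h1, h2, h3⟩ := ih
    have hf : f (n+5) = 2 * f (n+4) - f (n+3) + f (n+2) := rfl
    refine ⟨?_, ?_, ?_⟩
    · show ((mcs n + qcs n : ℕ) : ℤ) = f (n+3)
      push_cast; omega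
    · show ((pcs n : ℕ) : ℤ) = f (n+4) - f (n+3)
      omega
    · show ((mcs n + pcs n : ℕ) : ℤ) = f (n+5) - f (n+4)
      push_cast; omega

lemma mcs_pos (n : ℕ) : 1 ≤ mcs n := by
  induction n with
  | zero => simp [mcs]
  | succ n ih => rw [show mcs (n+1) = mcs n + qcs n from rfl]; omega

noncomputable section

lemma exists_root : ∃ r : ℝ, (1.7 ≤ r ∧ r ≤ 1.8) ∧ r^3 = 2*r^2 - r + 1 := by
  have hcont : ContinuousOn (fun x : ℝ => x^3 - 2*x^2 + x - 1) (Set.Icc 1.7 1.8) := by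
    fun_prop
  have hsub := intermediate_value_Icc (by norm_num : (1.7:ℝ) ≤ 1.8) hcont
  have h0 : (0:ℝ) ∈ Set.Icc ((1.7:ℝ)^3 - 2*(1.7:ℝ)^2 + 1.7 - 1) ((1.8:ℝ)^3 - 2*(1.8:ℝ)^2 + 1.8 - 1) := by
    constructor <;> norm_num
  obtain ⟨r, hmem, hval⟩ := hsub h0
  have hval' : r^3 - 2*r^2 + r - 1 = 0 := hval
  exact ⟨r, ⟨hmem.1, hmem.2⟩, by linarith⟩

variable (r : ℝ) (A F : ℕ → ℝ)

def wseq (n : ℕ) : ℝ := A n - (((1+5*r)/23)*n + (-72+224*r-116*r^2)/529)*r^n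
def vseq (n : ℕ) : ℝ := wseq r A (n+2) - (2-r)*wseq r A (n+1) + (r-1)^2 * wseq r A n
def yseq (n : ℕ) : ℝ := vseq r A (n+2) - (2-r)*vseq r A (n+1) + (r-1)^2 * vseq r A n
def gseq (n : ℕ) : ℝ := F n - ((3+6*r+r^2)/23)*r^n

variable {r A F}

lemma y_zero (hr : r^3 = 2*r^2 - r + 1) (hA0 : A 0 = 0) (hA1 : A 1 = 0) (hA2 : A 2 = 2)
    (hA3 : A 3 = 7) (hA4 : A 4 = 16) : yseq r A 0 = 0 := by
  simp only [yseq, vseq, wseq, hA0, hA1, hA2, hA3, hA4]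
  push_cast
  linear_combination ((-72 + 1694*r - 4782*r^2 + 1044*r^3)/529) * hr

lemma y_one (hr : r^3 = 2*r^2 - r + 1) (hA1 : A 1 = 0) (hA2 : A 2 = 2)
    (hA3 : A 3 = 7) (hA4 : A 4 = 16) (hA5 : A 5 = 34) : yseq r A 1 = 0 := by
  simp only [yseq, vseq, wseq, hA1, hA2, hA3, hA4, hA5]
  push_cast
  linear_combination ((-2116 - 49*r + 2177*r^2 - 5817*r^3 + 1044*r^4)/529) * hr

lemma y_rec (hr : r^3 = 2*r^2 - r + 1)
    (h6 : ∀ n, A (n+6) = 4*A (n+5) - 6*A (n+4) + 6*A (n+3) - 5*A (n+2) + 2*A (n+1) - A n)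
    (n : ℕ) : yseq r A (n+2) = 2*r*yseq r A (n+1) - r^2*yseq r A n := by
  simp only [yseq, vseq, wseq]
  push_cast
  linear_combination (h6 n) + ((r^3-2*r^2+r+1)*A n - 2*A (n+1) + 4*A (n+2) - 2*A (n+3)) * hr

lemma y_eq_zero (hr : r^3 = 2*r^2 - r + 1) (hA0 : A 0 = 0) (hA1 : A 1 = 0) (hA2 : A 2 = 2)
    (hA3 : A 3 = 7) (hA4 : A 4 = 16) (hA5 : A 5 = 34)
    (h6 : ∀ n, A (n+6) = 4*A (n+5) - 6*A (n+4) + 6*A (n+3) - 5*A (n+2) + 2*A (n+1) - A n) :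
    ∀ n, yseq r A n = 0 := by
  have key : ∀ n, yseq r A n = 0 ∧ yseq r A (n+1) = 0 := by
    intro n
    induction n with
    | zero => exact ⟨y_zero hr hA0 hA1 hA2 hA3 hA4, y_one hr hA1 hA2 hA3 hA4 hA5⟩
    | succ n ih =>
      refine ⟨ih.2, ?_⟩
      rw [y_rec hr h6 n, ih.1, ih.2]
      ring
  exact fun n => (key n).1

lemma v_rec (hr : r^3 = 2*r^2 - r + 1) (hA0 : A 0 = 0) (hA1 : A 1 = 0) (hA2 : A 2 = 2)
    (hA3 : A 3 = 7) (hA4 : A 4 = 16) (hA5 : A 5 = 34)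
    (h6 : ∀ n, A (n+6) = 4*A (n+5) - 6*A (n+4) + 6*A (n+3) - 5*A (n+2) + 2*A (n+1) - A n) :
    ∀ n, vseq r A (n+2) = (2-r)*vseq r A (n+1) - (r-1)^2 * vseq r A n := by
  intro n
  have := y_eq_zero hr hA0 hA1 hA2 hA3 hA4 hA5 h6 n
  simp only [yseq] at this
  linarith

lemma g_rec (hr : r^3 = 2*r^2 - r + 1) (hF0 : F 0 = 1) (hF1 : F 1 = 1) (hF2 : F 2 = 2)
    (hF3 : ∀ n, F (n+3) = 2*F (n+2) - F (n+1) + F n) :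
    ∀ n, gseq r F (n+2) = (2-r)*gseq r F (n+1) - (r-1)^2 * gseq r F n := by
  have h0 : gseq r F 2 - (2-r)*gseq r F 1 + (r-1)^2 * gseq r F 0 = 0 := by
    simp only [gseq, hF0, hF1, hF2]
    linear_combination ((-20 - 3*r)/23) * hr
  have hstep : ∀ n, gseq r F (n+3) - (2-r)*gseq r F (n+2) + (r-1)^2 * gseq r F (n+1)
      = r * (gseq r F (n+2) - (2-r)*gseq r F (n+1) + (r-1)^2 * gseq r F n) := by
    intro n
    simp only [gseq]
    linear_combination hF3 n - F n * hr
  have key : ∀ n, gseq r F (n+2) - (2-r)*gseq r F (n+1) + (r-1)^2 * gseq r F n = 0 := by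
    intro n
    induction n with
    | zero => exact h0
    | succ n ih => rw [hstep n, ih]; ring
  intro n
  have := key n
  linarith

-- generic energy lemmas
lemma energy_decay (b c : ℝ) (u : ℕ → ℝ) (hu : ∀ n, u (n+2) = b*u (n+1) - c*u n) :
    ∀ n, u (n+1)^2 - b*u (n+1)*u n + c*(u n)^2
      = c^n * (u 1^2 - b*u 1*u 0 + c*(u 0)^2) := by
  intro n
  induction n with
  | zero => simp
  | succ n ih =>
    rw [pow_succ]
    linear_combination (u (n+2) - c*u n) * hu n + c * ih

lemma abs_le_of_sq (x y : ℝ) (hy : 0 ≤ y) (h : x^2 ≤ y^2) : |x| ≤ y := by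
  rw [← Real.sqrt_sq_eq_abs, ← Real.sqrt_sq hy]
  exact Real.sqrt_le_sqrt h

/-- any solution of the 2nd order recurrence decays like `(r-1)^n` -/
lemma seq_bound (h17 : 1.7 ≤ r) (h18 : r ≤ 1.8) (u : ℕ → ℝ)
    (hu : ∀ n, u (n+2) = (2-r)*u (n+1) - (r-1)^2*u n) :
    ∃ C : ℝ, 0 ≤ C ∧ ∀ n, |u n| ≤ C * (r-1)^n := by
  have hκ : (0:ℝ) < r*(3*r-4)/4 := by nlinarith
  have hE0 : 0 ≤ u 1^2 - (2-r)*u 1*u 0 + (r-1)^2*(u 0)^2 := by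
    nlinarith [sq_nonneg (u 1 - (2-r)*u 0/2), sq_nonneg (u 0)]
  have hED := energy_decay (2-r) ((r-1)^2) u hu
  have hm0 : (0:ℝ) ≤ r - 1 := by linarith
  have hlow : ∀ n, (r*(3*r-4)/4) * (u n)^2
      ≤ ((r-1)^2)^n * (u 1^2 - (2-r)*u 1*u 0 + (r-1)^2*(u 0)^2) := by
    intro n
    nlinarith [sq_nonneg (u (n+1) - (2-r)*u n/2), hED n]
  refine ⟨Real.sqrt ((u 1^2 - (2-r)*u 1*u 0 + (r-1)^2*(u 0)^2)/(r*(3*r-4)/4)),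
    Real.sqrt_nonneg _, fun n => ?_⟩
  apply abs_le_of_sq _ _ (mul_nonneg (Real.sqrt_nonneg _) (pow_nonneg hm0 n))
  have hsq : (Real.sqrt ((u 1^2 - (2-r)*u 1*u 0 + (r-1)^2*(u 0)^2)/(r*(3*r-4)/4)) * (r-1)^n)^2
      = (u 1^2 - (2-r)*u 1*u 0 + (r-1)^2*(u 0)^2)/(r*(3*r-4)/4) * ((r-1)^2)^n := by
    rw [mul_pow, Real.sq_sqrt (by positivity), ← pow_mul, ← pow_mul, mul_comm 2 n]
  rw [hsq, div_mul_eq_mul_div, le_div_iff₀ hκ]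
  nlinarith [hlow n]

set_option maxHeartbeats 2000000 in
/-- bound for the `w` sequence: `|w n| ≤ (C₁ + C₂ n) (r-1)^n` -/
lemma w_bound (h17 : 1.7 ≤ r) (h18 : r ≤ 1.8) (w : ℕ → ℝ)
    (hv : ∀ n, (w (n+4) - (2-r)*w (n+3) + (r-1)^2*w (n+2))
        = (2-r)*(w (n+3) - (2-r)*w (n+2) + (r-1)^2*w (n+1))
          - (r-1)^2*(w (n+2) - (2-r)*w (n+1) + (r-1)^2*w n)) :
    ∃ C₁ C₂ : ℝ, 0 ≤ C₁ ∧ 0 ≤ C₂ ∧ ∀ n, |w n| ≤ (C₁ + C₂*n) * (r-1)^n := by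
  have hm0 : (0:ℝ) ≤ r - 1 := by linarith
  have hκ : (0:ℝ) < r*(3*r-4)/4 := by nlinarith
  obtain ⟨V, hV0, hVb⟩ := seq_bound h17 h18
    (fun n => w (n+2) - (2-r)*w (n+1) + (r-1)^2*w n) (fun n => by
      linarith [hv n])
  set v : ℕ → ℝ := fun n => w (n+2) - (2-r)*w (n+1) + (r-1)^2*w n with hvdef
  set N : ℕ → ℝ := fun n => w (n+1)^2 - (2-r)*w (n+1)*w n + (r-1)^2*(w n)^2 with hNdef
  have hN0 : ∀ n, 0 ≤ N n := by
    intro n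
    simp only [hNdef]
    nlinarith [sq_nonneg (w (n+1) - (2-r)*w n/2), sq_nonneg (w n)]
  set S : ℕ → ℝ := fun n => Real.sqrt (N n) with hSdef
  have hS0 : ∀ n, 0 ≤ S n := fun n => Real.sqrt_nonneg _
  have hSsq : ∀ n, S n^2 = N n := fun n => Real.sq_sqrt (hN0 n)
  have hb2c : (2-r)^2 ≤ 4*(r-1)^2 := by nlinarith
  have hkey : ∀ n, ((2-r)*w (n+1) - 2*(r-1)^2*w n)^2 ≤ 36*(r-1)^2*(N n) := by
    intro n
    simp only [hNdef]
    nlinarith [sq_nonneg (2*(r-1)^2*w n - (2-r)*w (n+1)),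
      mul_nonneg (sub_nonneg.2 hb2c) (sq_nonneg (w (n+1)))]
  have habs : ∀ n, |(2-r)*w (n+1) - 2*(r-1)^2*w n| ≤ 6*(r-1)*S n := by
    intro n
    apply abs_le_of_sq _ _ (by nlinarith [hS0 n])
    have e : (6*(r-1)*S n)^2 = 36*(r-1)^2*N n := by
      linear_combination 36*(r-1)^2 * hSsq n
    rw [e]; exact hkey n
  have hstep : ∀ n, S (n+1) ≤ (r-1)*S n + 3*|v n| := by
    intro n
    have hNs : N (n+1) = (r-1)^2*N n + v n*((2-r)*w (n+1) - 2*(r-1)^2*w n) + (v n)^2 := by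
      simp only [hNdef, hvdef]; ring
    have h3 : v n * ((2-r)*w (n+1) - 2*(r-1)^2*w n) ≤ |v n| * (6*(r-1)*S n) := by
      refine le_trans (le_abs_self _) ?_
      rw [abs_mul]
      exact mul_le_mul_of_nonneg_left (habs n) (abs_nonneg _)
    have hNle : N (n+1) ≤ ((r-1)*S n + 3*|v n|)^2 := by
      have e : ((r-1)*S n + 3*|v n|)^2
          = (r-1)^2*N n + 6*(r-1)*S n*|v n| + 9*(v n)^2 := by
        linear_combination (r-1)^2 * hSsq n + 9 * sq_abs (v n)
      rw [e, hNs]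
      nlinarith [h3, sq_abs (v n), sq_nonneg (v n)]
    calc S (n+1) = Real.sqrt (N (n+1)) := rfl
      _ ≤ Real.sqrt (((r-1)*S n + 3*|v n|)^2) := Real.sqrt_le_sqrt hNle
      _ = (r-1)*S n + 3*|v n| := Real.sqrt_sq (by nlinarith [hS0 n, abs_nonneg (v n)])
  have hSb : ∀ n, S n ≤ (S 0 + 6*V*n) * (r-1)^n := by
    intro n
    induction n with
    | zero => simp
    | succ n ih =>
      have e1 : (r-1)*S n ≤ (r-1)*((S 0 + 6*V*n)*(r-1)^n) :=
        mul_le_mul_of_nonneg_left ih hm0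
      have e2 : |v n| ≤ V*(r-1)^n := hVb n
      have hpn : (0:ℝ) ≤ (r-1)^n := pow_nonneg hm0 n
      have hmono : 3*(V*(r-1)^n) ≤ 6*V*((r-1)^n*(r-1)) := by
        nlinarith [mul_nonneg (mul_nonneg hV0 hpn) (show (0:ℝ) ≤ 2*r-3 by linarith)]
      calc S (n+1) ≤ (r-1)*S n + 3*|v n| := hstep n
        _ ≤ (r-1)*((S 0 + 6*V*n)*(r-1)^n) + 3*(V*(r-1)^n) := by linarith
        _ ≤ (S 0 + 6*V*(n+1:ℕ)) * (r-1)^(n+1) := by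
            rw [pow_succ]; push_cast; nlinarith [hmono]
  have hKk : (Real.sqrt (r*(3*r-4)/4))^2 = r*(3*r-4)/4 := Real.sq_sqrt (le_of_lt hκ)
  have hKk0 : 0 < Real.sqrt (r*(3*r-4)/4) := Real.sqrt_pos.2 hκ
  refine ⟨S 0/Real.sqrt (r*(3*r-4)/4), 6*V/Real.sqrt (r*(3*r-4)/4),
    div_nonneg (hS0 0) hKk0.le, div_nonneg (by linarith) hKk0.le, fun n => ?_⟩
  have hwN : (r*(3*r-4)/4) * (w n)^2 ≤ N n := by
    simp only [hNdef]
    nlinarith [sq_nonneg (w (n+1) - (2-r)*w n/2)]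
  have hcomb : S 0/Real.sqrt (r*(3*r-4)/4) + 6*V/Real.sqrt (r*(3*r-4)/4)*(n:ℝ)
      = (S 0 + 6*V*n)/Real.sqrt (r*(3*r-4)/4) := by ring
  rw [hcomb]
  apply abs_le_of_sq _ _ (by positivity)
  have hy2 : (((S 0 + 6*V*(n:ℝ))/Real.sqrt (r*(3*r-4)/4))*(r-1)^n)^2
      = ((S 0 + 6*V*(n:ℝ))*(r-1)^n)^2/(r*(3*r-4)/4) := by
    rw [mul_pow, div_pow, hKk, mul_pow]
    ring
  rw [hy2, le_div_iff₀ hκ]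
  have h5 := hSb n
  have h7 : S n^2 ≤ ((S 0 + 6*V*(n:ℝ))*(r-1)^n)^2 := by nlinarith [hS0 n]
  have h8 : (r*(3*r-4)/4) * (w n)^2 ≤ ((S 0 + 6*V*(n:ℝ))*(r-1)^n)^2 :=
    le_trans hwN (le_trans (le_of_eq (hSsq n).symm) h7)
  linarith [h8]

open Topology in
lemma tendsto_limit (h17 : 1.7 ≤ r) (h18 : r ≤ 1.8) (hr : r^3 = 2*r^2 - r + 1)
    (hA0 : A 0 = 0) (hA1 : A 1 = 0) (hA2 : A 2 = 2) (hA3 : A 3 = 7) (hA4 : A 4 = 16)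
    (hA5 : A 5 = 34)
    (h6 : ∀ n, A (n+6) = 4*A (n+5) - 6*A (n+4) + 6*A (n+3) - 5*A (n+2) + 2*A (n+1) - A n)
    (hF0 : F 0 = 1) (hF1 : F 1 = 1) (hF2 : F 2 = 2)
    (hF3 : ∀ n, F (n+3) = 2*F (n+2) - F (n+1) + F n) (hFpos : ∀ n, 1 ≤ F n) :
    Tendsto (fun n : ℕ => A n / (n * F n)) atTop (𝓝 ((14+5*r-3*r^2)/23)) := by
  have hr0 : (0:ℝ) < r := by linarith
  have hm0 : (0:ℝ) ≤ r - 1 := by linarith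
  obtain ⟨C₁, C₂, hC₁, hC₂, hw⟩ := w_bound h17 h18 (wseq r A) (fun n => by
    have h1 := v_rec hr hA0 hA1 hA2 hA3 hA4 hA5 h6 n
    simp only [vseq] at h1
    linarith)
  obtain ⟨G, hG0, hg⟩ := seq_bound h17 h18 (gseq r F) (g_rec hr hF0 hF1 hF2 hF3)
  have hq0 : (0:ℝ) ≤ (r-1)/r := div_nonneg hm0 hr0.le
  have hq1 : (r-1)/r < 1 := by rw [div_lt_one hr0]; linarith
  have hqpow : ∀ n : ℕ, ((r-1)/r)^n = (r-1)^n/r^n := fun n => div_pow _ _ _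
  have hrpow : ∀ n : ℕ, (0:ℝ) < r^n := fun n => pow_pos hr0 n
  have t_w : Tendsto (fun n : ℕ => wseq r A n / (n * r^n)) atTop (𝓝 0) := by
    apply squeeze_zero_norm' (a := fun n : ℕ => (C₁+C₂) * ((r-1)/r)^n)
    · filter_upwards [eventually_ge_atTop 1] with n hn
      have hn1 : (1:ℝ) ≤ (n:ℝ) := by exact_mod_cast hn
      have h1 : |wseq r A n| ≤ (C₁+C₂*n)*(r-1)^n := hw n
      have h2 : (C₁+C₂*(n:ℝ))*(r-1)^n ≤ ((C₁+C₂)*n)*(r-1)^n := by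
        have h3 : (C₁+C₂*(n:ℝ)) ≤ (C₁+C₂)*n := by nlinarith
        exact mul_le_mul_of_nonneg_right h3 (pow_nonneg hm0 n)
      have hd : (0:ℝ) < (n:ℝ) * r^n := mul_pos (by linarith) (hrpow n)
      calc ‖wseq r A n/(n*r^n)‖ = |wseq r A n|/((n:ℝ)*r^n) := by
            rw [Real.norm_eq_abs, abs_div, abs_of_pos hd]
        _ ≤ ((C₁+C₂)*n*(r-1)^n)/((n:ℝ)*r^n) :=
            (div_le_div_iff_of_pos_right hd).mpr (le_trans h1 h2)
        _ = (C₁+C₂) * ((r-1)/r)^n := by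
            rw [hqpow]
            field_simp
    · simpa using
        (tendsto_pow_atTop_nhds_zero_of_lt_one hq0 hq1).const_mul (C₁+C₂)
  have t_g : Tendsto (fun n : ℕ => gseq r F n / r^n) atTop (𝓝 0) := by
    apply squeeze_zero_norm' (a := fun n : ℕ => G * ((r-1)/r)^n)
    · filter_upwards with n
      calc ‖gseq r F n/r^n‖ = |gseq r F n|/r^n := by
            rw [Real.norm_eq_abs, abs_div, abs_of_pos (hrpow n)]
        _ ≤ (G*(r-1)^n)/r^n := (div_le_div_iff_of_pos_right (hrpow n)).mpr (hg n)
        _ = G * ((r-1)/r)^n := by rw [hqpow]; ring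
    · simpa using
        (tendsto_pow_atTop_nhds_zero_of_lt_one hq0 hq1).const_mul G
  have t_num : Tendsto (fun n : ℕ => A n/(n*r^n)) atTop (𝓝 ((1+5*r)/23)) := by
    have heq : ∀ᶠ (n : ℕ) in atTop, (1+5*r)/23
        + ((-72+224*r-116*r^2)/529*(1/(n:ℝ)) + wseq r A n/(n*r^n)) = A n/((n:ℝ)*r^n) := by
      filter_upwards [eventually_ge_atTop 1] with n hn
      have hn1 : (1:ℝ) ≤ (n:ℝ) := by exact_mod_cast hn
      have hne : (n:ℝ) ≠ 0 := by linarith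
      have hA : A n = (((1+5*r)/23)*(n:ℝ) + (-72+224*r-116*r^2)/529)*r^n + wseq r A n := by
        simp [wseq]
      rw [hA]
      field_simp
      ring
    apply Tendsto.congr' heq
    have := (tendsto_const_nhds (x := (1+5*r)/23) (f := atTop (α := ℕ))).add
      ((tendsto_one_div_atTop_nhds_zero_nat.const_mul ((-72+224*r-116*r^2)/529)).add t_w)
    simpa using this
  have t_den : Tendsto (fun n : ℕ => F n/r^n) atTop (𝓝 ((3+6*r+r^2)/23)) := by
    have heq : ∀ n : ℕ, (3+6*r+r^2)/23 + gseq r F n/r^n = F n/r^n := by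
      intro n
      have hF : F n = ((3+6*r+r^2)/23)*r^n + gseq r F n := by simp [gseq]
      rw [hF]
      field_simp
    apply Tendsto.congr heq
    have := (tendsto_const_nhds (x := (3+6*r+r^2)/23) (f := atTop (α := ℕ))).add t_g
    simpa using this
  have hα'pos : (0:ℝ) < (3+6*r+r^2)/23 := by nlinarith
  have t_div := t_num.div t_den hα'pos.ne'
  have heq2 : ∀ᶠ n in atTop, (fun n : ℕ => A n/(n*r^n) / (F n/r^n)) n
      = A n/((n:ℝ)*F n) := by
    filter_upwards [eventually_ge_atTop 1] with n hn
    have hn1 : (1:ℝ) ≤ (n:ℝ) := by exact_mod_cast hn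
    have hFn : (0:ℝ) < F n := by linarith [hFpos n]
    have hne : (n:ℝ) ≠ 0 := by linarith
    field_simp
  have hval : ((1+5*r)/23)/((3+6*r+r^2)/23) = (14+5*r-3*r^2)/23 := by
    rw [div_eq_div_iff hα'pos.ne' (by norm_num : (23:ℝ) ≠ 0)]
    linear_combination ((19+3*r)/23)*hr
  rw [← hval]
  exact Tendsto.congr' heq2 t_div

end

lemma mss_vals : mss 0 = 0 ∧ mss 1 = 0 ∧ mss 2 = 2 ∧ mss 3 = 7 ∧ mss 4 = 16 ∧ mss 5 = 34 := by
  refine ⟨rfl, ?_, ?_, ?_, ?_, ?_⟩ <;> simp [mss, qcs, qss, pcs, pss, mcs]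

lemma mcs_vals : mcs 0 = 1 ∧ mcs 1 = 1 ∧ mcs 2 = 2 := by
  refine ⟨rfl, ?_, ?_⟩ <;> simp [mcs, qcs, pcs]

lemma mss_rec6 (n : ℕ) : ((mss (n+6) : ℝ)) = 4*(mss (n+5) : ℝ) - 6*(mss (n+4) : ℝ)
    + 6*(mss (n+3) : ℝ) - 5*(mss (n+2) : ℝ) + 2*(mss (n+1) : ℝ) - (mss n : ℝ) := by
  simp only [mss, qcs, qss, pcs, mcs, pss]
  push_cast
  ring

lemma mcs_rec3 (n : ℕ) : ((mcs (n+3) : ℝ)) = 2*(mcs (n+2) : ℝ) - (mcs (n+1) : ℝ) + (mcs n : ℝ) := by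
  simp only [mcs, qcs, pcs]
  push_cast
  ring

lemma cardano (r : ℝ) (hr : r^3 = 2*r^2 - r + 1) :
    (1/3) * (2 - ((23 + 3 * Real.sqrt 69) / 1058) ^ ((1 : ℝ)/3)
      + ((-23 + 3 * Real.sqrt 69) / 1058) ^ ((1 : ℝ)/3)) = (14+5*r-3*r^2)/23 ∧
    (1/2 : ℝ) < (1/3) * (2 - ((23 + 3 * Real.sqrt 69) / 1058) ^ ((1 : ℝ)/3)
      + ((-23 + 3 * Real.sqrt 69) / 1058) ^ ((1 : ℝ)/3)) := by
  have hs : Real.sqrt 69 ^ 2 = 69 := Real.sq_sqrt (by norm_num)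
  have hsnn : 0 ≤ Real.sqrt 69 := Real.sqrt_nonneg _
  have hs8 : 8 ≤ Real.sqrt 69 := by nlinarith
  have hb1 : (0:ℝ) ≤ (23 + 3*Real.sqrt 69)/1058 := by positivity
  have hb2 : (0:ℝ) ≤ (-23 + 3*Real.sqrt 69)/1058 := by
    apply div_nonneg (by linarith) (by norm_num)
  set u : ℝ := ((23 + 3*Real.sqrt 69)/1058) ^ ((1:ℝ)/3) with hudef
  set v : ℝ := ((-23 + 3*Real.sqrt 69)/1058) ^ ((1:ℝ)/3) with hvdef
  have hu3 : u^3 = (23 + 3*Real.sqrt 69)/1058 := by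
    rw [hudef, ← Real.rpow_natCast (((23 + 3*Real.sqrt 69)/1058) ^ ((1:ℝ)/3)) 3,
      ← Real.rpow_mul hb1]
    norm_num
  have hv3 : v^3 = (-23 + 3*Real.sqrt 69)/1058 := by
    rw [hvdef, ← Real.rpow_natCast (((-23 + 3*Real.sqrt 69)/1058) ^ ((1:ℝ)/3)) 3,
      ← Real.rpow_mul hb2]
    norm_num
  have huv : u*v = 1/23 := by
    have hprod : (23 + 3*Real.sqrt 69)/1058 * ((-23 + 3*Real.sqrt 69)/1058)
        = ((1:ℝ)/23)^(3:ℕ) := by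
      linear_combination (9/1119364 : ℝ) * hs
    calc u*v = ((23 + 3*Real.sqrt 69)/1058 * ((-23 + 3*Real.sqrt 69)/1058)) ^ ((1:ℝ)/3) :=
          (Real.mul_rpow hb1 hb2).symm
      _ = (((1:ℝ)/23)^(3:ℕ)) ^ ((1:ℝ)/3) := by rw [hprod]
      _ = 1/23 := by
          rw [← Real.rpow_natCast ((1:ℝ)/23) 3, ← Real.rpow_mul (by norm_num)]
          norm_num
  have h_t0 : 23*(v - u)^3 + 3*(v - u) + 1 = 0 := by
    linear_combination 23*hv3 - 23*hu3 - 69*(v - u)*huv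
  have h_t1 : 23*((-4+15*r-9*r^2)/23)^3 + 3*((-4+15*r-9*r^2)/23) + 1 = 0 := by
    linear_combination ((-4347 - 44712*r + 50301*r^2 - 16767*r^3)/12167) * hr
  have hfac : ((v-u) - (-4+15*r-9*r^2)/23)
      * (23*((v-u)^2 + (v-u)*((-4+15*r-9*r^2)/23) + ((-4+15*r-9*r^2)/23)^2) + 3) = 0 := by
    linear_combination h_t0 - h_t1
  have hpos2 : 0 < 23*((v-u)^2 + (v-u)*((-4+15*r-9*r^2)/23) + ((-4+15*r-9*r^2)/23)^2) + 3 := by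
    nlinarith [sq_nonneg ((v-u) + (-4+15*r-9*r^2)/23), sq_nonneg ((v-u) - (-4+15*r-9*r^2)/23)]
  have ht01 : v - u = (-4+15*r-9*r^2)/23 := by
    rcases mul_eq_zero.mp hfac with h | h
    · linarith
    · linarith
  have htneg : -(1/2) < v - u := by
    nlinarith [h_t0, sq_nonneg (v - u + 1/2), sq_nonneg (4*(v-u) - 1)]
  constructor
  · linarith
  · linarith

open Topology in
/-- The limiting density of `1`s in a random multus string:
`lim aₙ/(n f(n+2)) = (1/3)[2 - ((23+3√69)/1058)^{1/3} + ((-23+3√69)/1058)^{1/3}]`,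
and this density exceeds `1/2`. -/
theorem multus_density :
    Tendsto (fun n : ℕ => (multusBitsum n : ℝ) / (n * (f (n + 2) : ℝ)))
      atTop (nhds ((1/3) * (2 - ((23 + 3 * Real.sqrt 69) / 1058) ^ ((1 : ℝ)/3)
        + ((-23 + 3 * Real.sqrt 69) / 1058) ^ ((1 : ℝ)/3)))) ∧
    (1/2 : ℝ) < (1/3) * (2 - ((23 + 3 * Real.sqrt 69) / 1058) ^ ((1 : ℝ)/3)
        + ((-23 + 3 * Real.sqrt 69) / 1058) ^ ((1 : ℝ)/3)) := by
  obtain ⟨r, ⟨h17, h18⟩, hr⟩ := exists_root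
  obtain ⟨hm0, hm1, hm2, hm3, hm4, hm5⟩ := mss_vals
  obtain ⟨hc0, hc1, hc2⟩ := mcs_vals
  obtain ⟨hcar1, hcar2⟩ := cardano r hr
  refine ⟨?_, hcar2⟩
  rw [hcar1]
  have tmain : Tendsto (fun n : ℕ => ((mss n : ℝ)) / (n * (mcs n : ℝ))) atTop
      (𝓝 ((14+5*r-3*r^2)/23)) := by
    apply tendsto_limit h17 h18 hr (A := fun n => (mss n : ℝ)) (F := fun n => (mcs n : ℝ))
    · exact_mod_cast hm0
    · exact_mod_cast hm1
    · exact_mod_cast hm2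
    · exact_mod_cast hm3
    · exact_mod_cast hm4
    · exact_mod_cast hm5
    · exact mss_rec6
    · exact_mod_cast hc0
    · exact_mod_cast hc1
    · exact_mod_cast hc2
    · exact mcs_rec3
    · intro n; exact_mod_cast mcs_pos n
  have hfun : (fun n : ℕ => (multusBitsum n : ℝ) / (n * (f (n + 2) : ℝ)))
      = fun n : ℕ => ((mss n : ℝ)) / (n * (mcs n : ℝ)) := by
    funext n
    have h1 : (multusBitsum n : ℝ) = (mss n : ℝ) := by
      exact_mod_cast congrArg (Nat.cast : ℕ → ℝ) (multusBitsum_eq n)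
    have h2 : (f (n+2) : ℝ) = (mcs n : ℝ) := by
      have h3 := (mcs_f n).1
      exact_mod_cast congrArg (Int.cast : ℤ → ℝ) h3.symm
    rw [h1, h2]
  rw [hfun]
  exact tmain
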